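/- Let K be a normed field, n : ℕ, b : Fin n → ℕ. Let (d_k) be a sequence of maps Fin n → Kˣ with d_k i = d_k j whenever b i = b j, and ‖d_k i / d_k j‖ → ∞ whenever b i < b j; let a_k = diagonal(d_k). Suppose g_k → g and a_k · g_k · a_k⁻¹ → g' entrywise in M_n(K), and suppose moreover that g is invertible. Then the block diagonal part r = D(g) is invertible, u = g · r⁻¹ is strictly-lower block unipotent, n' = r⁻¹ · g' is strictly-upper block unipotent, and there exists N such that for all k ≥ N there are matrices u_k (strictly-lower block unipotent), r_k (block diagonal: r_k i j = 0 unless b i = b j), and n_k (strictly-upper block unipotent) with g_k = u_k · r_k · (a_k⁻¹ · n_k · a_k), and u_k → u, r_k → r, n_k → n' entrywise. -/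

import Mathlib

open Filter Topology

/-- A matrix is block diagonal (w.r.t. the block function `b`) if its entries vanish off the
diagonal blocks. -/
def IsBlockDiag {K : Type*} [Zero K] {n : ℕ} (b : Fin n → ℕ)
    (M : Matrix (Fin n) (Fin n) K) : Prop :=
  ∀ i j, b i ≠ b j → M i j = 0

/-- A matrix is strictly-upper block unipotent if it is `1 + N` with `N` supported on the
entries `(i,j)` with `b i < b j`. -/
def IsStrictUpperUnip {K : Type*} [Zero K] [One K] [Add K] {n : ℕ} (b : Fin n → ℕ)
    (M : Matrix (Fin n) (Fin n) K) : Prop :=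
  ∃ N : Matrix (Fin n) (Fin n) K, (∀ i j, ¬ b i < b j → N i j = 0) ∧ M = 1 + N

/-- A matrix is strictly-lower block unipotent if it is `1 + N` with `N` supported on the
entries `(i,j)` with `b j < b i`. -/
def IsStrictLowerUnip {K : Type*} [Zero K] [One K] [Add K] {n : ℕ} (b : Fin n → ℕ)
    (M : Matrix (Fin n) (Fin n) K) : Prop :=
  ∃ N : Matrix (Fin n) (Fin n) K, (∀ i j, ¬ b j < b i → N i j = 0) ∧ M = 1 + N

/-!
Entrywise `(a_k g_k a_k⁻¹) i j = (d_k i / d_k j) * g_k i j`. This converges while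
`‖d_k i / d_k j‖ → ∞` for `b i < b j`, so `g` is block lower triangular; hence `r = D(g)` is
invertible and `g = u r` with `u` lower unipotent.

Block LDU factors depend continuously on the matrix wherever they exist: splitting off the lowest
block, `[[A, B], [C, E]]` factors through `A`, `C A⁻¹`, `A⁻¹ B` and the Schur complement
`E - C A⁻¹ B`, to which induction applies. So eventually `g_k = u_k r_k v_k` with `u_k → u`,
`r_k → r`, `v_k → 1`. Put `n_k = a_k v_k a_k⁻¹`. Conjugation by `a_k` fixes the block diagonal
`r_k` and drives `u_k` to `1`, since it multiplies the entries below the blocks by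
`d_k i / d_k j → 0`. Then `a_k g_k a_k⁻¹ = (a_k u_k a_k⁻¹) r_k n_k` forces `n_k → r⁻¹ g'`, which is
upper unipotent because unipotent matrices form a closed set.
-/

open Matrix OrderDual

namespace Matrix

variable {ι ι' α R : Type*}

def blockDiagPart [Zero R] [DecidableEq α] (b : ι → α) (M : Matrix ι ι R) : Matrix ι ι R :=
  of fun i j => if b i = b j then M i j else 0

/-- Block upper triangular with identity diagonal blocks; `IsBlockUnipotent (toDual ∘ b)` is the
lower triangular version. -/
def IsBlockUnipotent [Zero R] [One R] [DecidableEq ι] [LE α] (b : ι → α)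
    (M : Matrix ι ι R) : Prop :=
  ∀ i j, b j ≤ b i → M i j = (1 : Matrix ι ι R) i j

section blockDiagPart
variable [Zero R] [LinearOrder α] {b : ι → α}

@[simp] theorem blockDiagPart_apply (M : Matrix ι ι R) (i j : ι) :
    blockDiagPart b M i j = if b i = b j then M i j else 0 := rfl

theorem blockTriangular_blockDiagPart (M : Matrix ι ι R) :
    (blockDiagPart b M).BlockTriangular b :=
  fun _ _ h => if_neg h.ne'

@[simp] theorem blockDiagPart_blockDiagPart (M : Matrix ι ι R) :
    blockDiagPart b (blockDiagPart b M) = blockDiagPart b M := by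
  ext i j; by_cases h : b i = b j <;> simp [h]

@[simp] theorem blockDiagPart_one [DecidableEq ι] [One R] :
    blockDiagPart b (1 : Matrix ι ι R) = 1 := by
  ext i j; by_cases h : i = j <;> simp [h, one_apply]

end blockDiagPart

theorem BlockTriangular.blockDiagPart_mul [Fintype ι] [NonUnitalNonAssocSemiring R] [LinearOrder α]
    {b : ι → α} {M N : Matrix ι ι R} (hM : M.BlockTriangular b) (hN : N.BlockTriangular b) :
    blockDiagPart b (M * N) = blockDiagPart b M * blockDiagPart b N := by
  ext i j
  simp only [blockDiagPart_apply, mul_apply]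
  split_ifs with hij
  · refine Finset.sum_congr rfl fun l _ => ?_
    rcases lt_trichotomy (b l) (b i) with h | h | h
    · simp [hM h, h.ne']
    · simp [h, hij]
    · simp [hN (hij ▸ h), h.ne]
  · refine (Finset.sum_eq_zero fun l _ => ?_).symm
    by_cases h : b i = b l
    · simp [h ▸ hij]
    · simp [h]

section IsBlockUnipotent
variable [DecidableEq ι] [LinearOrder α] {b : ι → α}

theorem isBlockUnipotent_one [Zero R] [One R] : IsBlockUnipotent b (1 : Matrix ι ι R) :=
  fun _ _ _ => rfl

theorem isBlockUnipotent_of_blockTriangular [Zero R] [One R] {M : Matrix ι ι R}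
    (hM : M.BlockTriangular b) (hD : blockDiagPart b M = 1) : IsBlockUnipotent b M := by
  intro i j hij
  rcases hij.lt_or_eq with hij | hij
  · rw [hM hij, one_apply_ne (by rintro rfl; exact lt_irrefl _ hij)]
  · simpa [hij] using congr_fun₂ hD i j

theorem IsBlockUnipotent.submatrix [Zero R] [One R] [DecidableEq ι'] {M : Matrix ι ι R}
    (hM : IsBlockUnipotent b M) {e : ι' → ι} (he : Function.Injective e) :
    IsBlockUnipotent (b ∘ e) (M.submatrix e e) := fun i j hij => by
  simpa [one_apply, he.eq_iff] using hM (e i) (e j) hij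

theorem isClosed_setOf_isBlockUnipotent [Zero R] [One R] [TopologicalSpace R] [T1Space R] :
    IsClosed {M : Matrix ι ι R | IsBlockUnipotent b M} := by
  simp only [IsBlockUnipotent, Set.ofPred_forall]
  exact isClosed_iInter fun i => isClosed_iInter fun j => isClosed_iInter fun _ =>
    isClosed_singleton.preimage (continuous_id.matrix_elem i j)

end IsBlockUnipotent

section Inverse
variable [Fintype ι] [DecidableEq ι] [CommRing R] [LinearOrder α] {b : ι → α}
  {M : Matrix ι ι R}

theorem BlockTriangular.blockDiagPart_mul_blockDiagPart_inv (hM : M.BlockTriangular b)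
    (hMu : IsUnit M) : blockDiagPart b M * blockDiagPart b M⁻¹ = 1 := by
  have := hMu.invertible
  rw [← hM.blockDiagPart_mul (blockTriangular_inv_of_blockTriangular hM), mul_inv_of_invertible,
    blockDiagPart_one]

theorem BlockTriangular.isUnit_blockDiagPart (hM : M.BlockTriangular b) (hMu : IsUnit M) :
    IsUnit (blockDiagPart b M) :=
  (isUnit_iff_isUnit_det _).2
    (isUnit_det_of_right_inverse (hM.blockDiagPart_mul_blockDiagPart_inv hMu))

theorem BlockTriangular.isBlockUnipotent_mul_inv_blockDiagPart (hM : M.BlockTriangular b)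
    (hMu : IsUnit M) : IsBlockUnipotent b (M * (blockDiagPart b M)⁻¹) := by
  have hD := hM.blockDiagPart_mul_blockDiagPart_inv hMu
  rw [inv_eq_right_inv hD]
  refine isBlockUnipotent_of_blockTriangular (hM.mul (blockTriangular_blockDiagPart _)) ?_
  rw [hM.blockDiagPart_mul (blockTriangular_blockDiagPart _), blockDiagPart_blockDiagPart, hD]

end Inverse

def IsBlockLDU [DecidableEq ι] [LinearOrder α] [Zero R] [One R] (b : ι → α)
    (U D V : Matrix ι ι R) : Prop :=
  IsBlockUnipotent (toDual ∘ b) U ∧ blockDiagPart b D = D ∧ IsBlockUnipotent b V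

theorem IsBlockLDU.submatrix [DecidableEq ι] [DecidableEq ι'] [LinearOrder α] [Zero R] [One R]
    {b : ι → α} {U D V : Matrix ι ι R} (h : IsBlockLDU b U D V) {e : ι' → ι}
    (he : Function.Injective e) :
    IsBlockLDU (b ∘ e) (U.submatrix e e) (D.submatrix e e) (V.submatrix e e) :=
  ⟨h.1.submatrix he, congrArg (·.submatrix e e) h.2.1, h.2.2.submatrix he⟩

section Sum
variable {ι₁ ι₂ : Type*} [LinearOrder α] {t : α} {b₂ : ι₂ → α} [Zero R] {A : Matrix ι₁ ι₁ R}
  {B : Matrix ι₁ ι₂ R} {C : Matrix ι₂ ι₁ R} {D : Matrix ι₂ ι₂ R}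

theorem isBlockUnipotent_sumElim_fromBlocks_iff [DecidableEq ι₁] [DecidableEq ι₂] [One R]
    (ht : ∀ c, t < b₂ c) :
    IsBlockUnipotent (Sum.elim (fun _ : ι₁ => t) b₂) (fromBlocks A B C D) ↔
      A = 1 ∧ C = 0 ∧ IsBlockUnipotent b₂ D := by
  simp [IsBlockUnipotent, ← fromBlocks_one, Sum.forall, ← Matrix.ext_iff, (ht _).le,
    (ht _).not_ge, forall_and, and_assoc]

theorem isBlockUnipotent_toDual_sumElim_fromBlocks_iff [DecidableEq ι₁] [DecidableEq ι₂] [One R]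
    (ht : ∀ c, t < b₂ c) :
    IsBlockUnipotent (toDual ∘ Sum.elim (fun _ : ι₁ => t) b₂) (fromBlocks A B C D) ↔
      A = 1 ∧ B = 0 ∧ IsBlockUnipotent (toDual ∘ b₂) D := by
  simp [IsBlockUnipotent, ← fromBlocks_one, Sum.forall, ← Matrix.ext_iff, (ht _).le,
    (ht _).not_ge, forall_and]

theorem blockDiagPart_sumElim_fromBlocks (ht : ∀ c, t ≠ b₂ c) :
    blockDiagPart (Sum.elim (fun _ : ι₁ => t) b₂) (fromBlocks A B C D) =
      fromBlocks A 0 0 (blockDiagPart b₂ D) := by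
  ext (a | c) (a' | c')
  · simp
  · simp [ht]
  · simp [(ht _).symm]
  · rfl

theorem isBlockLDU_sumElim_fromBlocks_iff [DecidableEq ι₁] [DecidableEq ι₂] [One R]
    (ht : ∀ c, t < b₂ c) {U₂ D₂ V₂ : Matrix ι₂ ι₂ R} :
    IsBlockLDU (Sum.elim (fun _ : ι₁ => t) b₂) (fromBlocks 1 0 C U₂) (fromBlocks A 0 0 D₂)
      (fromBlocks 1 B 0 V₂) ↔ IsBlockLDU b₂ U₂ D₂ V₂ := by
  simp [IsBlockLDU, isBlockUnipotent_sumElim_fromBlocks_iff ht,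
    isBlockUnipotent_toDual_sumElim_fromBlocks_iff ht,
    blockDiagPart_sumElim_fromBlocks fun c => (ht c).ne]

theorem IsBlockLDU.exists_eq_fromBlocks [DecidableEq ι₁] [DecidableEq ι₂] [One R]
    (ht : ∀ c, t < b₂ c) {U D V : Matrix (ι₁ ⊕ ι₂) (ι₁ ⊕ ι₂) R}
    (h : IsBlockLDU (Sum.elim (fun _ : ι₁ => t) b₂) U D V) :
    ∃ C A B U₂ D₂ V₂,
      U = fromBlocks 1 0 C U₂ ∧ D = fromBlocks A 0 0 D₂ ∧ V = fromBlocks 1 B 0 V₂ := by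
  obtain ⟨hU, hD, hV⟩ := h
  rw [← fromBlocks_toBlocks U, isBlockUnipotent_toDual_sumElim_fromBlocks_iff ht] at hU
  rw [← fromBlocks_toBlocks D, blockDiagPart_sumElim_fromBlocks fun c => (ht c).ne,
    fromBlocks_inj] at hD
  rw [← fromBlocks_toBlocks V, isBlockUnipotent_sumElim_fromBlocks_iff ht] at hV
  refine ⟨U.toBlocks₂₁, D.toBlocks₁₁, V.toBlocks₁₂, U.toBlocks₂₂, D.toBlocks₂₂, V.toBlocks₂₂,
    ?_, ?_, ?_⟩
  · rw [← hU.1, ← hU.2.1, fromBlocks_toBlocks]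
  · rw [hD.2.1, hD.2.2.1, fromBlocks_toBlocks]
  · rw [← hV.1, ← hV.2.1, fromBlocks_toBlocks]

end Sum

theorem fromBlocks_eq_mul_mul_of_schur {ι₁ ι₂ : Type*} [Fintype ι₁] [Fintype ι₂]
    [DecidableEq ι₁] [DecidableEq ι₂] [CommRing R] {A : Matrix ι₁ ι₁ R} {B : Matrix ι₁ ι₂ R}
    {C : Matrix ι₂ ι₁ R} {D U₂ D₂ V₂ : Matrix ι₂ ι₂ R} (hA : IsUnit A.det)
    (h : U₂ * D₂ * V₂ = D - C * A⁻¹ * B) :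
    fromBlocks A B C D =
      fromBlocks 1 0 (C * A⁻¹) U₂ * fromBlocks A 0 0 D₂ * fromBlocks 1 (A⁻¹ * B) 0 V₂ := by
  simp [fromBlocks_multiply, Matrix.mul_assoc, hA, h]

section Topology
variable {β l m n : Type*} [TopologicalSpace R] {F : Filter β}

theorem _root_.Filter.Tendsto.matrix_mul [Fintype m] [Mul R] [AddCommMonoid R] [ContinuousAdd R]
    [ContinuousMul R] {f : β → Matrix l m R} {g : β → Matrix m n R} {A : Matrix l m R}
    {B : Matrix m n R} (hf : Tendsto f F (𝓝 A)) (hg : Tendsto g F (𝓝 B)) :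
    Tendsto (fun x => f x * g x) F (𝓝 (A * B)) :=
  ((continuous_fst.matrix_mul continuous_snd).tendsto (A, B)).comp (hf.prodMk_nhds hg)

theorem _root_.Filter.Tendsto.matrix_fromBlocks {l' m' : Type*} {fA : β → Matrix l m R}
    {fB : β → Matrix l m' R} {fC : β → Matrix l' m R} {fD : β → Matrix l' m' R}
    {A : Matrix l m R} {B : Matrix l m' R} {C : Matrix l' m R} {D : Matrix l' m' R}
    (hA : Tendsto fA F (𝓝 A)) (hB : Tendsto fB F (𝓝 B)) (hC : Tendsto fC F (𝓝 C))
    (hD : Tendsto fD F (𝓝 D)) :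
    Tendsto (fun x => fromBlocks (fA x) (fB x) (fC x) (fD x)) F (𝓝 (fromBlocks A B C D)) := by
  refine tendsto_pi_nhds.2 fun i => tendsto_pi_nhds.2 fun j => ?_
  rcases i with i | i <;> rcases j with j | j
  exacts [(hA.apply_nhds i).apply_nhds j, (hB.apply_nhds i).apply_nhds j,
    (hC.apply_nhds i).apply_nhds j, (hD.apply_nhds i).apply_nhds j]

variable [Fintype n] [DecidableEq n] [Field R] [IsTopologicalDivisionRing R] {A : Matrix n n R}

theorem _root_.Filter.Tendsto.matrix_inv {f : β → Matrix n n R} (hf : Tendsto f F (𝓝 A))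
    (hA : IsUnit A) : Tendsto (fun x => (f x)⁻¹) F (𝓝 A⁻¹) := by
  refine (continuousAt_matrix_inv A ?_).tendsto.comp hf
  rw [Ring.inverse_eq_inv']
  exact continuousAt_inv₀ ((isUnit_iff_isUnit_det A).1 hA).ne_zero

variable [T1Space R]

theorem eventually_isUnit_nhds (hA : IsUnit A) : ∀ᶠ M in 𝓝 A, IsUnit M := by
  simp only [isUnit_iff_isUnit_det, isUnit_iff_ne_zero]
  exact (continuous_id.matrix_det.tendsto A).eventually_ne
    ((isUnit_iff_isUnit_det A).1 hA).ne_zero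

theorem _root_.Filter.Tendsto.of_tendsto_mul_left {f g : β → Matrix n n R} {B : Matrix n n R}
    (hf : Tendsto f F (𝓝 A)) (hA : IsUnit A) (hfg : Tendsto (fun x => f x * g x) F (𝓝 B)) :
    Tendsto g F (𝓝 (A⁻¹ * B)) := by
  refine ((hf.matrix_inv hA).mul hfg).congr' ?_
  filter_upwards [hf.eventually (eventually_isUnit_nhds hA)] with x hx
  exact nonsing_inv_mul_cancel_left _ _ ((isUnit_iff_isUnit_det _).1 hx)

end Topology

section Continuity
variable (K : Type*) [Field K] [TopologicalSpace K] [LinearOrder α]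

def HasContinuousLDU [Fintype ι] [DecidableEq ι] (b : ι → α) : Prop :=
  ∀ ⦃U D V : Matrix ι ι K⦄, IsBlockLDU b U D V → IsUnit D →
    ∃ u d v : Matrix ι ι K → Matrix ι ι K,
      (∀ᶠ M in 𝓝 (U * D * V), IsBlockLDU b (u M) (d M) (v M) ∧ M = u M * d M * v M) ∧
      Tendsto u (𝓝 (U * D * V)) (𝓝 U) ∧ Tendsto d (𝓝 (U * D * V)) (𝓝 D) ∧
      Tendsto v (𝓝 (U * D * V)) (𝓝 V)

variable {K} [Fintype ι] [DecidableEq ι]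

theorem hasContinuousLDU_of_isEmpty [IsEmpty ι] (b : ι → α) : HasContinuousLDU K b := by
  intro U D V hLDU _
  exact ⟨fun _ => U, fun _ => D, fun _ => V,
    Eventually.of_forall fun _ => ⟨hLDU, Subsingleton.elim _ _⟩, tendsto_const_nhds,
    tendsto_const_nhds, tendsto_const_nhds⟩

theorem HasContinuousLDU.of_comp_equiv [Fintype ι'] [DecidableEq ι'] {b : ι → α} (e : ι' ≃ ι)
    (h : HasContinuousLDU K (b ∘ e)) : HasContinuousLDU K b := by
  intro U D V hLDU hD
  have hsub (M : Matrix ι ι K) : (M.submatrix e e).submatrix e.symm e.symm = M := by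
    simp [submatrix_submatrix]
  have hb : (b ∘ e) ∘ e.symm = b := by ext; simp
  obtain ⟨u, d, v, hev, hu, hd, hv⟩ := h (hLDU.submatrix e.injective)
    (by simpa [isUnit_iff_isUnit_det, det_submatrix_equiv_self] using hD)
  simp only [submatrix_mul_equiv] at hev hu hd hv
  have he : Tendsto (·.submatrix e e) (𝓝 (U * D * V)) (𝓝 ((U * D * V).submatrix e e)) :=
    (continuous_id.matrix_submatrix _ _).tendsto _
  have hsymm (M : Matrix ι ι K) :
      Tendsto (fun N : Matrix ι' ι' K => N.submatrix e.symm e.symm) (𝓝 (M.submatrix e e))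
        (𝓝 M) := by
    simpa only [id, hsub] using
      ((continuous_id (X := Matrix ι' ι' K)).matrix_submatrix e.symm e.symm).tendsto
        (M.submatrix e e)
  refine ⟨fun M => (u (M.submatrix e e)).submatrix e.symm e.symm,
    fun M => (d (M.submatrix e e)).submatrix e.symm e.symm,
    fun M => (v (M.submatrix e e)).submatrix e.symm e.symm, ?_, ?_, ?_, ?_⟩
  · filter_upwards [he.eventually hev] with M ⟨hM, hfac⟩
    refine ⟨hb ▸ hM.submatrix e.symm.injective, ?_⟩
    rw [submatrix_mul_equiv, submatrix_mul_equiv, ← hfac, hsub]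
  exacts [(hsymm U).comp (hu.comp he), (hsymm D).comp (hd.comp he),
    (hsymm V).comp (hv.comp he)]

variable [IsTopologicalDivisionRing K]

theorem tendsto_blockElimination {ι₁ ι₂ : Type*} [Fintype ι₁] [Fintype ι₂] [DecidableEq ι₁]
    {A : Matrix ι₁ ι₁ K} {B : Matrix ι₁ ι₂ K} {C : Matrix ι₂ ι₁ K} {S₀ : Matrix ι₂ ι₂ K}
    (hA : IsUnit A.det) :
    let M₀ := fromBlocks A (A * B) (C * A) (C * A * B + S₀)
    Tendsto (fun M => M.toBlocks₁₁) (𝓝 M₀) (𝓝 A) ∧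
      Tendsto (fun M => M.toBlocks₂₁ * M.toBlocks₁₁⁻¹) (𝓝 M₀) (𝓝 C) ∧
      Tendsto (fun M => M.toBlocks₁₁⁻¹ * M.toBlocks₁₂) (𝓝 M₀) (𝓝 B) ∧
      Tendsto (fun M => M.toBlocks₂₂ - M.toBlocks₂₁ * M.toBlocks₁₁⁻¹ * M.toBlocks₁₂) (𝓝 M₀)
        (𝓝 S₀) := by
  intro M₀
  have h₁₁ : Tendsto (fun M => M.toBlocks₁₁) (𝓝 M₀) (𝓝 A) :=
    (continuous_id.matrix_submatrix _ _).tendsto M₀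
  have h₁₂ : Tendsto (fun M => M.toBlocks₁₂) (𝓝 M₀) (𝓝 (A * B)) :=
    (continuous_id.matrix_submatrix _ _).tendsto M₀
  have h₂₁ : Tendsto (fun M => M.toBlocks₂₁) (𝓝 M₀) (𝓝 (C * A)) :=
    (continuous_id.matrix_submatrix _ _).tendsto M₀
  have h₂₂ : Tendsto (fun M => M.toBlocks₂₂) (𝓝 M₀) (𝓝 (C * A * B + S₀)) :=
    (continuous_id.matrix_submatrix _ _).tendsto M₀
  have hinv := h₁₁.matrix_inv ((isUnit_iff_isUnit_det A).2 hA)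
  have hCA : Tendsto (fun M => M.toBlocks₂₁ * M.toBlocks₁₁⁻¹) (𝓝 M₀) (𝓝 C) := by
    simpa only [mul_nonsing_inv_cancel_right _ _ hA] using h₂₁.matrix_mul hinv
  refine ⟨h₁₁, hCA, ?_, ?_⟩
  · simpa only [nonsing_inv_mul_cancel_left _ _ hA] using hinv.matrix_mul h₁₂
  · simpa only [← Matrix.mul_assoc C, add_sub_cancel_left] using h₂₂.sub (hCA.matrix_mul h₁₂)

variable [T1Space K]

theorem HasContinuousLDU.sumElim {ι₁ ι₂ : Type*} [Fintype ι₁] [Fintype ι₂] [DecidableEq ι₁]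
    [DecidableEq ι₂] {t : α} {b₂ : ι₂ → α} (ht : ∀ c, t < b₂ c) (h₂ : HasContinuousLDU K b₂) :
    HasContinuousLDU K (Sum.elim (fun _ : ι₁ => t) b₂) := by
  intro U D V hLDU hD
  obtain ⟨C, A, B, U₂, D₂, V₂, rfl, rfl, rfl⟩ := hLDU.exists_eq_fromBlocks ht
  rw [isBlockLDU_sumElim_fromBlocks_iff ht] at hLDU
  have hAD₂ : IsUnit A.det ∧ IsUnit D₂.det := by
    simpa [isUnit_iff_isUnit_det, det_fromBlocks_zero₁₂, IsUnit.mul_iff] using hD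
  obtain ⟨u₂, d₂, v₂, hev₂, hu₂, hd₂, hv₂⟩ := h₂ hLDU ((isUnit_iff_isUnit_det _).2 hAD₂.2)
  have hM₀ : fromBlocks 1 0 C U₂ * fromBlocks A 0 0 D₂ * fromBlocks 1 B 0 V₂ =
      fromBlocks A (A * B) (C * A) (C * A * B + U₂ * D₂ * V₂) := by
    simp [fromBlocks_multiply, Matrix.mul_assoc]
  rw [hM₀]
  obtain ⟨h₁₁, hCA, hAB, hS⟩ := tendsto_blockElimination (S₀ := U₂ * D₂ * V₂) hAD₂.1
  set S : Matrix (ι₁ ⊕ ι₂) (ι₁ ⊕ ι₂) K → Matrix ι₂ ι₂ K :=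
    fun M => M.toBlocks₂₂ - M.toBlocks₂₁ * M.toBlocks₁₁⁻¹ * M.toBlocks₁₂
  refine ⟨fun M => fromBlocks 1 0 (M.toBlocks₂₁ * M.toBlocks₁₁⁻¹) (u₂ (S M)),
    fun M => fromBlocks M.toBlocks₁₁ 0 0 (d₂ (S M)),
    fun M => fromBlocks 1 (M.toBlocks₁₁⁻¹ * M.toBlocks₁₂) 0 (v₂ (S M)), ?_,
    tendsto_const_nhds.matrix_fromBlocks tendsto_const_nhds hCA (hu₂.comp hS),
    h₁₁.matrix_fromBlocks tendsto_const_nhds tendsto_const_nhds (hd₂.comp hS),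
    tendsto_const_nhds.matrix_fromBlocks hAB tendsto_const_nhds (hv₂.comp hS)⟩
  have hA : IsUnit A := (isUnit_iff_isUnit_det A).2 hAD₂.1
  filter_upwards [hS.eventually hev₂, h₁₁.eventually (eventually_isUnit_nhds hA)]
    with M ⟨hM, hfac⟩ hM₁₁
  refine ⟨(isBlockLDU_sumElim_fromBlocks_iff ht).2 hM, ?_⟩
  conv_lhs => rw [← fromBlocks_toBlocks M]
  exact fromBlocks_eq_mul_mul_of_schur ((isUnit_iff_isUnit_det _).1 hM₁₁) hfac.symm

theorem hasContinuousLDU (b : ι → α) : HasContinuousLDU K b := by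
  induction hcard : Fintype.card ι using Nat.strong_induction_on generalizing ι with
  | _ n ih =>
    rcases isEmpty_or_nonempty ι with hι | hι
    · exact hasContinuousLDU_of_isEmpty b
    obtain ⟨i₀, hi₀⟩ := Finite.exists_min b
    have hb : b ∘ Equiv.sumCompl (fun i => b i = b i₀) =
        Sum.elim (fun _ => b i₀) (fun c : {i // ¬ b i = b i₀} => b c) := by
      funext x
      rcases x with a | c
      exacts [a.2, rfl]
    refine .of_comp_equiv (Equiv.sumCompl (fun i => b i = b i₀)) (hb ▸ ?_)
    refine .sumElim (fun c => (hi₀ c).lt_of_ne (Ne.symm c.2)) (ih _ ?_ _ rfl)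
    exact hcard ▸ Fintype.card_subtype_lt (x := i₀) (by simp)

end Continuity

section DiagConj
variable {K : Type*} [Field K] [Fintype ι] [DecidableEq ι]

def diagConj (d : ι → Kˣ) (M : Matrix ι ι K) : Matrix ι ι K :=
  diagonal (fun i => (d i : K)) * M * diagonal (fun i => (d i : K)⁻¹)

variable {d : ι → Kˣ}

theorem diagConj_apply (M : Matrix ι ι K) (i j : ι) :
    diagConj d M i j = (d i : K) / d j * M i j := by
  simp [diagConj, div_eq_mul_inv, mul_right_comm]

theorem diagConj_mul (M N : Matrix ι ι K) : diagConj d (M * N) = diagConj d M * diagConj d N := by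
  ext i j
  simp only [diagConj_apply, mul_apply, Finset.mul_sum]
  refine Finset.sum_congr rfl fun l _ => ?_
  field_simp

theorem diagonal_inv_mul_diagConj_mul_diagonal (M : Matrix ι ι K) :
    diagonal (fun i => (d i : K)⁻¹) * diagConj d M * diagonal (fun i => (d i : K)) = M := by
  ext i j
  simp only [mul_diagonal, diagonal_mul, diagConj_apply]
  field_simp

variable [LinearOrder α] {b : ι → α}

theorem diagConj_eq_self_of_blockDiagPart_eq (hd : ∀ i j, b i = b j → d i = d j)
    {M : Matrix ι ι K} (hM : blockDiagPart b M = M) : diagConj d M = M := by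
  ext i j
  rw [diagConj_apply]
  by_cases hij : b i = b j
  · simp [hd i j hij]
  · rw [← hM, blockDiagPart_apply, if_neg hij, mul_zero]

theorem IsBlockUnipotent.diagConj {M : Matrix ι ι K} (hM : IsBlockUnipotent b M)
    (d : ι → Kˣ) : IsBlockUnipotent b (diagConj d M) := fun i j hij => by
  rw [diagConj_apply, hM i j hij]
  by_cases h : i = j
  · simp [h]
  · simp [one_apply_ne h]

end DiagConj

section NormedField
variable {K β : Type*} [NormedField K] [Fintype ι] [DecidableEq ι] [LinearOrder α] {b : ι → α}
  {l : Filter β} {d : β → ι → Kˣ}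

theorem blockTriangular_toDual_of_tendsto_diagConj [l.NeBot]
    (hd : ∀ i j, b i < b j → Tendsto (fun x => ‖(d x i : K) / d x j‖) l atTop)
    {G : β → Matrix ι ι K} {g g' : Matrix ι ι K} (hG : Tendsto G l (𝓝 g))
    (hG' : Tendsto (fun x => diagConj (d x) (G x)) l (𝓝 g')) :
    g.BlockTriangular (toDual ∘ b) := by
  intro i j (hij : b i < b j)
  by_contra hne
  have hnorm : Tendsto (fun x => ‖diagConj (d x) (G x) i j‖) l atTop := by
    simp only [diagConj_apply, norm_mul]
    exact (hd i j hij).atTop_mul_pos (norm_pos_iff.2 hne) ((hG.apply_nhds i).apply_nhds j).norm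
  exact not_tendsto_atTop_of_tendsto_nhds ((hG'.apply_nhds i).apply_nhds j).norm hnorm

theorem tendsto_diagConj_one
    (hd : ∀ i j, b j < b i → Tendsto (fun x => ‖(d x i : K) / d x j‖) l (𝓝 0))
    {u : β → Matrix ι ι K} {U : Matrix ι ι K} (hu : Tendsto u l (𝓝 U))
    (hunip : ∀ᶠ x in l, IsBlockUnipotent (toDual ∘ b) (u x)) :
    Tendsto (fun x => diagConj (d x) (u x)) l (𝓝 1) := by
  refine tendsto_pi_nhds.2 fun i => tendsto_pi_nhds.2 fun j => ?_
  rcases lt_or_ge (b j) (b i) with hji | hij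
  · rw [one_apply_ne (by rintro rfl; exact lt_irrefl _ hji), tendsto_zero_iff_norm_tendsto_zero]
    simpa [diagConj_apply] using (hd i j hji).mul ((hu.apply_nhds i).apply_nhds j).norm
  · refine tendsto_const_nhds.congr' ?_
    filter_upwards [hunip] with x hx
    exact (hx.diagConj (d x) i j hij).symm

theorem tendsto_diagConj_of_isBlockLDU (hconst : ∀ x i j, b i = b j → d x i = d x j)
    (hd : ∀ i j, b j < b i → Tendsto (fun x => ‖(d x i : K) / d x j‖) l (𝓝 0))
    {G u r v : β → Matrix ι ι K} {U R g' : Matrix ι ι K}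
    (hfac : ∀ᶠ x in l, IsBlockLDU b (u x) (r x) (v x) ∧ G x = u x * r x * v x)
    (hu : Tendsto u l (𝓝 U)) (hr : Tendsto r l (𝓝 R)) (hR : IsUnit R)
    (hG' : Tendsto (fun x => diagConj (d x) (G x)) l (𝓝 g')) :
    Tendsto (fun x => diagConj (d x) (v x)) l (𝓝 (R⁻¹ * g')) := by
  have hc := tendsto_diagConj_one hd hu (hfac.mono fun _ hx => hx.1.1)
  have hcr : Tendsto (fun x => diagConj (d x) (u x) * r x) l (𝓝 R) := by
    simpa using hc.mul hr
  refine hcr.of_tendsto_mul_left hR (hG'.congr' ?_)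
  filter_upwards [hfac] with x ⟨⟨_, hrx, _⟩, hGx⟩
  rw [hGx, diagConj_mul, diagConj_mul, diagConj_eq_self_of_blockDiagPart_eq (hconst x) hrx]

end NormedField

theorem IsBlockUnipotent.isStrictUpperUnip {K : Type*} [AddGroupWithOne K] {n : ℕ}
    {b : Fin n → ℕ} {M : Matrix (Fin n) (Fin n) K} (h : IsBlockUnipotent b M) :
    IsStrictUpperUnip b M :=
  ⟨-1 + M, fun i j hij => by rw [add_apply, h i j (not_lt.1 hij), neg_apply, neg_add_cancel],
    (add_neg_cancel_left 1 M).symm⟩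

theorem IsBlockUnipotent.isStrictLowerUnip {K : Type*} [AddGroupWithOne K] {n : ℕ}
    {b : Fin n → ℕ} {M : Matrix (Fin n) (Fin n) K} (h : IsBlockUnipotent (toDual ∘ b) M) :
    IsStrictLowerUnip b M :=
  ⟨-1 + M, fun i j hij => by rw [add_apply, h i j (not_lt.1 hij), neg_apply, neg_add_cancel],
    (add_neg_cancel_left 1 M).symm⟩

theorem isBlockDiag_of_blockDiagPart_eq {K : Type*} [Zero K] {n : ℕ} {b : Fin n → ℕ}
    {M : Matrix (Fin n) (Fin n) K} (h : blockDiagPart b M = M) : IsBlockDiag b M :=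
  fun i j hij => by rw [← h, blockDiagPart_apply, if_neg hij]

end Matrix

/-- With `(d_k)` as before (constant on blocks, `‖d_k i / d_k j‖ → ∞` when
`b i < b j`), if `g_k → g` and `a_k g_k a_k⁻¹ → g'` entrywise with `g` invertible, then
`r = D(g)` is invertible, `u = g r⁻¹` is strictly-lower block unipotent, `n' = r⁻¹ g'` is
strictly-upper block unipotent, and eventually `g_k = u_k r_k (a_k⁻¹ n_k a_k)` with
`u_k → u` strictly-lower unipotent, `r_k → r` block diagonal, `n_k → n'` strictly-upper
unipotent. -/
theorem stmt12 {K : Type*} [NormedField K] {n : ℕ} (b : Fin n → ℕ)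
    (d : ℕ → Fin n → Kˣ)
    (heq : ∀ k : ℕ, ∀ i j, b i = b j → d k i = d k j)
    (hinf : ∀ i j, b i < b j →
      Tendsto (fun k : ℕ => ‖(d k i : K) / (d k j : K)‖) atTop atTop)
    (gseq : ℕ → Matrix (Fin n) (Fin n) K) (g g' : Matrix (Fin n) (Fin n) K)
    (hg : Tendsto gseq atTop (nhds g))
    (hg' : Tendsto
      (fun k : ℕ =>
        (Matrix.diagonal fun i => (d k i : K)) * gseq k *
          Matrix.diagonal (fun i => ((d k i : K))⁻¹))
      atTop (nhds g'))
    (hginv : IsUnit g) :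
    IsUnit (Matrix.of fun i j => if b i = b j then g i j else (0 : K)) ∧
    IsStrictLowerUnip b (g * (Matrix.of fun i j => if b i = b j then g i j else (0 : K))⁻¹) ∧
    IsStrictUpperUnip b ((Matrix.of fun i j => if b i = b j then g i j else (0 : K))⁻¹ * g') ∧
    ∃ (N₀ : ℕ) (useq rseq nseq : ℕ → Matrix (Fin n) (Fin n) K),
      (∀ k : ℕ, N₀ ≤ k →
        IsStrictLowerUnip b (useq k) ∧ IsBlockDiag b (rseq k) ∧
        IsStrictUpperUnip b (nseq k) ∧
        gseq k = useq k * rseq k *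
          ((Matrix.diagonal fun i => ((d k i : K))⁻¹) * nseq k *
            Matrix.diagonal (fun i => (d k i : K)))) ∧
      Tendsto useq atTop
        (nhds (g * (Matrix.of fun i j => if b i = b j then g i j else (0 : K))⁻¹)) ∧
      Tendsto rseq atTop
        (nhds (Matrix.of fun i j => if b i = b j then g i j else (0 : K))) ∧
      Tendsto nseq atTop
        (nhds ((Matrix.of fun i j => if b i = b j then g i j else (0 : K))⁻¹ * g')) := by
  have hD : (Matrix.of fun i j => if b i = b j then g i j else (0 : K)) = blockDiagPart b g := rfl
  rw [hD]
  have hlow : g.BlockTriangular (toDual ∘ b) :=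
    blockTriangular_toDual_of_tendsto_diagConj hinf hg hg'
  have hr : IsUnit (blockDiagPart b g) := hlow.isUnit_blockDiagPart hginv
  have hLDU : IsBlockLDU b (g * (blockDiagPart b g)⁻¹) (blockDiagPart b g) 1 :=
    ⟨hlow.isBlockUnipotent_mul_inv_blockDiagPart hginv, blockDiagPart_blockDiagPart g,
      isBlockUnipotent_one⟩
  obtain ⟨u, r, v, hev, hu, hr', hv⟩ := hasContinuousLDU b hLDU hr
  rw [Matrix.mul_one, nonsing_inv_mul_cancel_right _ _ ((isUnit_iff_isUnit_det _).1 hr)]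
    at hev hu hr' hv
  have hfac := hg.eventually hev
  have hsmall : ∀ i j, b j < b i → Tendsto (fun k => ‖(d k i : K) / d k j‖) atTop (𝓝 0) :=
    fun i j h => by simpa [Function.comp_def, Pi.inv_def] using (hinf j i h).inv_tendsto_atTop
  have hn := tendsto_diagConj_of_isBlockLDU heq hsmall hfac (hu.comp hg) (hr'.comp hg) hr hg'
  have hn' := isClosed_setOf_isBlockUnipotent.mem_of_tendsto hn
    (hfac.mono fun k hk => hk.1.2.2.diagConj (d k))
  obtain ⟨N₀, hN₀⟩ := eventually_atTop.1 hfac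
  refine ⟨hr, hLDU.1.isStrictLowerUnip, hn'.isStrictUpperUnip, N₀, u ∘ gseq, r ∘ gseq,
    fun k => diagConj (d k) (v (gseq k)), fun k hk => ?_, hu.comp hg, hr'.comp hg, hn⟩
  obtain ⟨⟨hu_k, hr_k, hv_k⟩, hg_k⟩ := hN₀ k hk
  exact ⟨hu_k.isStrictLowerUnip, isBlockDiag_of_blockDiagPart_eq hr_k,
    (hv_k.diagConj _).isStrictUpperUnip, by rwa [diagonal_inv_mul_diagConj_mul_diagonal]⟩
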